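/- Let F = GF(2^p) with primitive element ω, and let A, B be jointly superregular 3×3 lower triangular Toeplitz matrices with first columns [1, ω^{i_{a_1}}, ω^{i_{a_2}}]^T and [1, ω^{i_{b_1}}, ω^{i_{b_2}}]^T. Then the product AB is superregular if and only if ω^{i_{a_2}} + ω^{i_{b_2}} + ω^{i_{a_1}+i_{b_1}} ≠ 0 and ω^{i_{a_2}} + ω^{i_{b_2}} + ω^{i_{a_1}+i_{b_1}} + ω^{2i_{a_1}} + ω^{2i_{b_1}} ≠ 0. -/

import Mathlib

open Matrix

/-- Lower triangular Toeplitz matrix with first column `c`. -/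
def LTT {R : Type*} [CommRing R] {n : ℕ} (c : Fin n → R) : Matrix (Fin n) (Fin n) R :=
  Matrix.of fun j k =>
    if (k : ℕ) ≤ (j : ℕ) then c ⟨(j : ℕ) - (k : ℕ), lt_of_le_of_lt (Nat.sub_le _ _) j.isLt⟩
    else 0

/-- A lower triangular matrix is superregular if every proper submatrix
(rows `j₁ < ... < j_r`, columns `h₁ < ... < h_r` with `h_t ≤ j_t`) is nonsingular. -/
def Superregular {F : Type*} [Field F] {n : ℕ} (A : Matrix (Fin n) (Fin n) F) : Prop :=
  ∀ (r : ℕ) (row col : Fin r → Fin n), StrictMono row → StrictMono col →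
    (∀ t, col t ≤ row t) → (A.submatrix row col).det ≠ 0

/-- Two `n × n` lower triangular matrices are jointly superregular if every
proper (not trivially rank deficient) square submatrix of any matrix formed by
mixing rows of `A` and rows of `B` is nonsingular.  Rows are selected sorted by
their index (i.e. by increasing support), a row index may be used by both `A`
and `B`, and properness means `col t ≤ row t` for all `t`. -/
def JointlySuperregular {F : Type*} [Field F] {n : ℕ}
    (A B : Matrix (Fin n) (Fin n) F) : Prop :=
  ∀ (r : ℕ) (row : Fin r → Fin n) (tag : Fin r → Bool) (col : Fin r → Fin n),
    Monotone row → Function.Injective (fun t => (row t, tag t)) → StrictMono col →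
    (∀ t, col t ≤ row t) →
    (Matrix.of fun t s => (if tag t then A else B) (row t) (col s)).det ≠ 0


/-!
The product of the two unit lower triangular Toeplitz matrices is the unit lower triangular
Toeplitz matrix with subdiagonal entries `c₁ = a₁ + b₁` and `c₂ = a₂ + b₂ + a₁ b₁`. Its only
nontrivial proper minors are `c₁`, `c₂` and `c₁² - c₂`. Joint superregularity makes the mixed
minor `a₁ - b₁` nonzero, i.e. `c₁ ≠ 0`, and in characteristic two
`c₁² - c₂ = c₂ + a₁² + b₁²`.
-/

theorem charP_two_of_card_eq_two_pow {F : Type*} [Field F] [Fintype F] {p : ℕ} (hp : 0 < p)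
    (hF : Fintype.card F = 2 ^ p) : CharP F 2 :=
  CharTwo.of_one_ne_zero_of_two_eq_zero one_ne_zero <|
    (pow_eq_zero_iff hp.ne').mp (by exact_mod_cast hF ▸ FiniteField.cast_card_eq_zero F)

theorem LTT_three_mul {R : Type*} [CommRing R] (a₁ a₂ b₁ b₂ : R) :
    LTT ![1, a₁, a₂] * LTT ![1, b₁, b₂] = LTT ![1, a₁ + b₁, a₂ + b₂ + a₁ * b₁] := by
  ext j k
  fin_cases j <;> fin_cases k <;> simp [LTT, Matrix.mul_apply, Fin.sum_univ_three]
  ring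

section
variable {F : Type*} [Field F] {c₁ c₂ : F}

theorem LTT_three_apply_ne_zero (h₁ : c₁ ≠ 0) (h₂ : c₂ ≠ 0) {j k : Fin 3} (hkj : k ≤ j) :
    LTT ![1, c₁, c₂] j k ≠ 0 := by
  fin_cases j <;> fin_cases k <;> simp_all [LTT]

theorem det_LTT_three_submatrix_fin_two_ne_zero (h₁ : c₁ ≠ 0) (h₁₂ : c₁ ^ 2 ≠ c₂)
    {row col : Fin 2 → Fin 3} (hrow : StrictMono row) (hcol : StrictMono col)
    (hle : ∀ t, col t ≤ row t) : ((LTT ![1, c₁, c₂]).submatrix row col).det ≠ 0 := by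
  have hr : row 0 < row 1 := hrow Fin.zero_lt_one
  have hc : col 0 < col 1 := hcol Fin.zero_lt_one
  have h0 := hle 0
  have h1 := hle 1
  rw [det_fin_two]
  simp only [submatrix_apply]
  generalize row 0 = j₀, row 1 = j₁, col 0 = k₀, col 1 = k₁ at *
  fin_cases j₀ <;> fin_cases j₁ <;> fin_cases k₀ <;> fin_cases k₁ <;>
    simp_all [LTT, sq, sub_eq_zero]

theorem superregular_LTT_three_iff :
    Superregular (LTT ![1, c₁, c₂]) ↔ c₁ ≠ 0 ∧ c₂ ≠ 0 ∧ c₁ ^ 2 ≠ c₂ := by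
  constructor
  · intro h
    have h₁ := h 1 ![1] ![0] (Subsingleton.strictMono _) (Subsingleton.strictMono _) (by decide)
    have h₂ := h 1 ![2] ![0] (Subsingleton.strictMono _) (Subsingleton.strictMono _) (by decide)
    have h₁₂ := h 2 ![1, 2] ![0, 1] (by decide) (by decide) (by decide)
    rw [det_fin_one] at h₁ h₂
    rw [det_fin_two] at h₁₂
    simp_all [LTT, sq, sub_eq_zero]
  · rintro ⟨h₁, h₂, h₁₂⟩ r row col hrow hcol hle
    have hr : r ≤ 3 := by simpa using Fintype.card_le_of_injective row hrow.injective
    interval_cases r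
    · simp
    · simpa [det_fin_one] using LTT_three_apply_ne_zero h₁ h₂ (hle 0)
    · exact det_LTT_three_submatrix_fin_two_ne_zero h₁ h₁₂ hrow hcol hle
    · simp [hrow.eq_id, hcol.eq_id, det_fin_three, LTT]

theorem JointlySuperregular.ne_of_LTT_three {a₁ a₂ b₁ b₂ : F}
    (h : JointlySuperregular (LTT ![1, a₁, a₂]) (LTT ![1, b₁, b₂])) : a₁ ≠ b₁ := by
  have := h 2 ![1, 1] ![true, false] ![0, 1] (by decide) (by decide) (by decide) (by decide)
  simpa [det_fin_two, LTT, sub_eq_zero] using this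

end

theorem stmt12_general {p : ℕ} (hp : 0 < p) {F : Type*} [Field F] [Fintype F]
    (hF : Fintype.card F = 2 ^ p) (ω : F)
    (ia₁ ia₂ ib₁ ib₂ : ℕ)
    (hAB : JointlySuperregular (LTT ![(1 : F), ω ^ ia₁, ω ^ ia₂])
             (LTT ![(1 : F), ω ^ ib₁, ω ^ ib₂])) :
    Superregular (LTT ![(1 : F), ω ^ ia₁, ω ^ ia₂] * LTT ![(1 : F), ω ^ ib₁, ω ^ ib₂]) ↔
      (ω ^ ia₂ + ω ^ ib₂ + ω ^ (ia₁ + ib₁) ≠ 0 ∧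
       ω ^ ia₂ + ω ^ ib₂ + ω ^ (ia₁ + ib₁) + ω ^ (2 * ia₁) + ω ^ (2 * ib₁) ≠ 0) := by
  have := charP_two_of_card_eq_two_pow hp hF
  have hc₁ : ω ^ ia₁ + ω ^ ib₁ ≠ 0 := CharTwo.add_eq_zero.not.mpr hAB.ne_of_LTT_three
  rw [LTT_three_mul, superregular_LTT_three_iff, and_iff_right hc₁, ← pow_add, CharTwo.add_sq,
    ← pow_mul, ← pow_mul, mul_comm ia₁, mul_comm ib₁, add_assoc _ (ω ^ (2 * ia₁))]
  exact and_congr_right fun _ => (CharTwo.add_eq_zero.trans eq_comm).not.symm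

theorem stmt12 {p : ℕ} (hp : 0 < p) {F : Type*} [Field F] [Fintype F]
    (hF : Fintype.card F = 2 ^ p) (ω : F) (hω : orderOf ω = 2 ^ p - 1)
    (ia₁ ia₂ ib₁ ib₂ : ℕ) (ha₁ : ia₁ < 2 ^ p - 1) (ha₂ : ia₂ < 2 ^ p - 1)
    (hb₁ : ib₁ < 2 ^ p - 1) (hb₂ : ib₂ < 2 ^ p - 1)
    (hAB : JointlySuperregular (LTT ![(1 : F), ω ^ ia₁, ω ^ ia₂])
             (LTT ![(1 : F), ω ^ ib₁, ω ^ ib₂])) :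
    Superregular (LTT ![(1 : F), ω ^ ia₁, ω ^ ia₂] * LTT ![(1 : F), ω ^ ib₁, ω ^ ib₂]) ↔
      (ω ^ ia₂ + ω ^ ib₂ + ω ^ (ia₁ + ib₁) ≠ 0 ∧
       ω ^ ia₂ + ω ^ ib₂ + ω ^ (ia₁ + ib₁) + ω ^ (2 * ia₁) + ω ^ (2 * ib₁) ≠ 0) :=
  stmt12_general hp hF ω ia₁ ia₂ ib₁ ib₂ hAB
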